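/- arXiv:2506.15602 — 2 statements merged into one kernel-verified Lean document; each statement's English description precedes it below -/
import Mathlib

section
/- Fix 1 ≤ ℓ < K. For each j with ℓ < j ≤ K define c^min_{j,ℓ} as the sum, over all m ≥ 0 and all strictly decreasing index sequences j > j_1 > j_2 > ⋯ > j_m > ℓ, of the products r_min(X_j,S_{j_1}) · r_min(X_{j_1},S_{j_2}) ⋯ r_min(X_{j_{m−1}},S_{j_m}) · r_min(X_{j_m},S_ℓ), the m = 0 term being r_min(X_j,S_ℓ). Then c^min_{j,ℓ} ≤ h_min(X_j,S_ℓ) for every ℓ < j ≤ K. -/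
open Finset

/-- A finite state space partitioned into fitness levels `S_0, …, S_K`
(`lev x = k` means `x ∈ S_k`), together with an elitist row-stochastic
transition matrix `p`. -/
structure LevelChain (S : Type*) [Fintype S] where
  /-- the number of non-optimal levels -/
  K : ℕ
  /-- the level of each state -/
  lev : S → ℕ
  one_le_K : 1 ≤ K
  lev_le : ∀ x, lev x ≤ K
  level_nonempty : ∀ k ≤ K, ∃ x, lev x = k
  /-- transition probabilities -/
  p : S → S → ℝ
  p_nonneg : ∀ x y, 0 ≤ p x y
  p_row_sum : ∀ x, ∑ y, p x y = 1
  elitist : ∀ x y, lev x < lev y → p x y = 0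

variable {S : Type*} [Fintype S]

/-- The fitness level `S_k`. -/
def LevelChain.level (c : LevelChain S) (k : ℕ) : Finset S :=
  Finset.univ.filter fun x => c.lev x = k

/-- The union of levels `S_{[i,j]} = S_i ∪ ⋯ ∪ S_j`. -/
def LevelChain.levels (c : LevelChain S) (i j : ℕ) : Finset S :=
  Finset.univ.filter fun x => i ≤ c.lev x ∧ c.lev x ≤ j

/-- `p(x, A) = Σ_{y ∈ A} p(x, y)`. -/
def LevelChain.pSet (c : LevelChain S) (x : S) (A : Finset S) : ℝ :=
  ∑ y ∈ A, c.p x y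

/-- The standing reachability assumption: from every non-optimal state one can
move to a better level with positive probability. -/
def LevelChain.Reachable (c : LevelChain S) : Prop :=
  ∀ k, 1 ≤ k → k ≤ c.K → ∀ x, c.lev x = k → 0 < c.pSet x (c.levels 0 (k - 1))

/-- Conditional transition probability `r(x, S_j)`:
`r(x,S_j) = p(x,S_j)/(1 − p(x,S_k))` for `j ≠ k = lev x`, and `r(x,S_k) = 0`. -/
noncomputable def LevelChain.r (c : LevelChain S) (x : S) (j : ℕ) : ℝ :=
  if j = c.lev x then 0
  else c.pSet x (c.level j) / (1 - c.pSet x (c.level (c.lev x)))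

/-- `r_min(X_k, S_j) = min_{x ∈ S_k} r(x, S_j)`. -/
noncomputable def LevelChain.rmin (c : LevelChain S) (k j : ℕ) : ℝ :=
  sInf ((fun x => c.r x j) '' {x | c.lev x = k})

/-- `r_max(X_k, S_j) = max_{x ∈ S_k} r(x, S_j)`. -/
noncomputable def LevelChain.rmax (c : LevelChain S) (k j : ℕ) : ℝ :=
  sSup ((fun x => c.r x j) '' {x | c.lev x = k})

/-- `m` is the mean hitting time of the optimal level `S_0`. -/
def LevelChain.IsMeanHittingTime (c : LevelChain S) (m : S → ℝ) : Prop :=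
  (∀ x, 0 ≤ m x) ∧
  (∀ x, c.lev x = 0 → m x = 0) ∧
  (∀ x, c.lev x ≠ 0 → m x = 1 + ∑ y, c.p x y * m y)

/-- `mbar` is the mean level-leaving time on `S ∖ S_0`. -/
def LevelChain.IsLevelLeavingTime (c : LevelChain S) (mbar : S → ℝ) : Prop :=
  (∀ x, c.lev x ≠ 0 → 0 ≤ mbar x) ∧
  (∀ x, c.lev x ≠ 0 → mbar x = 1 + ∑ y ∈ c.level (c.lev x), c.p x y * mbar y)

/-- `h ℓ x` is the probability of hitting level `S_ℓ` starting from `x`. -/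
def LevelChain.IsHitProb (c : LevelChain S) (h : ℕ → S → ℝ) : Prop :=
  (∀ ℓ x, 0 ≤ h ℓ x ∧ h ℓ x ≤ 1) ∧
  (∀ ℓ x, c.lev x = ℓ → h ℓ x = 1) ∧
  (∀ ℓ x, c.lev x < ℓ → h ℓ x = 0) ∧
  (∀ ℓ x, ℓ < c.lev x →
    h ℓ x = ∑ y ∈ c.levels ℓ (c.lev x), c.p x y * h ℓ y)

/-!
Strong induction on `j`. Let `z ∈ S_j` minimise `h(·, S_ℓ)` over `S_j` and write `q = p(z, S_j)`.
First-step analysis at `z`, with the mass staying in `S_j` bounded below by `q · h(z, S_ℓ)`, gives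
`(1 - q) h(z, S_ℓ) ≥ p(z, S_ℓ) + Σ_{ℓ<i<j} p(z, S_i) h_min(X_i, S_ℓ)`. Since `1 - q > 0`, dividing
turns the `p(z, S_i)` into `r(z, S_i) ≥ r_min(X_j, S_i)`, and the induction hypothesis
`0 ≤ c^min_{i,ℓ} ≤ h_min(X_i, S_ℓ)` closes the step.
-/

namespace LevelChain

variable (c : LevelChain S)

theorem pSet_nonneg (x : S) (A : Finset S) : 0 ≤ c.pSet x A :=
  sum_nonneg fun y _ => c.p_nonneg x y

theorem pSet_le_one (x : S) (A : Finset S) : c.pSet x A ≤ 1 :=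
  c.p_row_sum x ▸ sum_le_sum_of_subset_of_nonneg (subset_univ A) fun y _ _ => c.p_nonneg x y

theorem pSet_add_pSet_le_one (x : S) {A B : Finset S} (hAB : Disjoint A B) :
    c.pSet x A + c.pSet x B ≤ 1 := by
  classical
  rw [pSet, pSet, ← sum_union hAB]
  exact c.pSet_le_one x _

theorem r_nonneg (x : S) (i : ℕ) : 0 ≤ c.r x i := by
  unfold r
  split_ifs
  · exact le_rfl
  · exact div_nonneg (c.pSet_nonneg x _) (sub_nonneg.2 (c.pSet_le_one x _))

theorem rmin_nonneg (k i : ℕ) : 0 ≤ c.rmin k i :=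
  Real.sInf_nonneg <| by
    rintro _ ⟨x, -, rfl⟩
    exact c.r_nonneg x i

theorem rmin_le_r (x : S) (i : ℕ) : c.rmin (c.lev x) i ≤ c.r x i :=
  csInf_le (Set.toFinite _).bddBelow ⟨x, rfl, rfl⟩

theorem pSet_level_lev_lt_one (hreach : c.Reachable) {x : S} (hx : 1 ≤ c.lev x) :
    c.pSet x (c.level (c.lev x)) < 1 := by
  have hdisj : Disjoint (c.level (c.lev x)) (c.levels 0 (c.lev x - 1)) := by
    simp only [disjoint_left, level, levels, mem_filter, mem_univ, true_and]
    omega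
  linarith [hreach _ hx (c.lev_le x) x rfl, c.pSet_add_pSet_le_one x hdisj]

theorem r_mul_eq_pSet (hreach : c.Reachable) {x : S} (hx : 1 ≤ c.lev x) {i : ℕ}
    (hi : i ≠ c.lev x) :
    c.r x i * (1 - c.pSet x (c.level (c.lev x))) = c.pSet x (c.level i) := by
  rw [r, if_neg hi]
  exact div_mul_cancel₀ _ (sub_pos.2 (c.pSet_level_lev_lt_one hreach hx)).ne'

theorem pSet_mul_le_sum_mul {x : S} {A : Finset S} {m : ℝ} {f : S → ℝ}
    (hm : ∀ y ∈ A, m ≤ f y) : c.pSet x A * m ≤ ∑ y ∈ A, c.p x y * f y := by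
  rw [pSet, sum_mul]
  exact sum_le_sum fun y hy => mul_le_mul_of_nonneg_left (hm y hy) (c.p_nonneg x y)

theorem sum_levels (a b : ℕ) (f : S → ℝ) :
    ∑ y ∈ c.levels a b, f y = ∑ i ∈ Icc a b, ∑ y ∈ c.level i, f y := by
  classical
  have hbUnion : c.levels a b = (Icc a b).biUnion c.level := by
    ext y
    simp [levels, level]
  rw [hbUnion, sum_biUnion]
  intro i _ k _ hik
  simp only [Function.onFun, disjoint_left, level, mem_filter, mem_univ, true_and]
  rintro y rfl rfl
  exact hik rfl

theorem IsHitProb.eq_pSet_add_sum {c : LevelChain S} {h : ℕ → S → ℝ} (hh : c.IsHitProb h)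
    {ℓ : ℕ} {x : S} (hx : ℓ < c.lev x) :
    h ℓ x = c.pSet x (c.level ℓ)
      + ∑ i ∈ Ioo ℓ (c.lev x), ∑ y ∈ c.level i, c.p x y * h ℓ y
      + ∑ y ∈ c.level (c.lev x), c.p x y * h ℓ y := by
  have hbottom : ∑ y ∈ c.level ℓ, c.p x y * h ℓ y = c.pSet x (c.level ℓ) :=
    sum_congr rfl fun y hy => by
      rw [hh.2.1 ℓ y (mem_filter.1 hy).2, mul_one]
  rw [hh.2.2.2 ℓ x hx, c.sum_levels, ← Ioc_insert_left hx.le, sum_insert left_notMem_Ioc,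
    ← Ioo_insert_right hx, sum_insert right_notMem_Ioo, hbottom]
  ring

theorem add_sum_rmin_mul_le_hitProb (hreach : c.Reachable) {h : ℕ → S → ℝ}
    (hh : c.IsHitProb h) {ℓ j : ℕ} (hℓj : ℓ < j) {b : ℕ → ℝ}
    (hb_nonneg : ∀ i ∈ Ioo ℓ j, 0 ≤ b i)
    (hb_le : ∀ i ∈ Ioo ℓ j, ∀ y, c.lev y = i → b i ≤ h ℓ y) {x : S} (hx : c.lev x = j) :
    c.rmin j ℓ + ∑ i ∈ Ioo ℓ j, c.rmin j i * b i ≤ h ℓ x := by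
  obtain ⟨z, hz, hmin⟩ := (c.level j).exists_min_image (h ℓ) ⟨x, mem_filter.2 ⟨mem_univ x, hx⟩⟩
  obtain rfl : c.lev z = j := (mem_filter.1 hz).2
  have hq : 0 < 1 - c.pSet z (c.level (c.lev z)) :=
    sub_pos.2 (c.pSet_level_lev_lt_one hreach (by omega))
  have hr_mul (i : ℕ) (hi : i ∈ Ioo ℓ (c.lev z)) :
      c.r z i * b i * (1 - c.pSet z (c.level (c.lev z))) = c.pSet z (c.level i) * b i := by
    rw [mul_right_comm, c.r_mul_eq_pSet hreach (by omega) (mem_Ioo.1 hi).2.ne]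
  have hfirst_step : c.r z ℓ + ∑ i ∈ Ioo ℓ (c.lev z), c.r z i * b i ≤ h ℓ z := by
    rw [← mul_le_mul_iff_left₀ hq]
    calc (c.r z ℓ + ∑ i ∈ Ioo ℓ (c.lev z), c.r z i * b i) * (1 - c.pSet z (c.level (c.lev z)))
        = c.pSet z (c.level ℓ) + ∑ i ∈ Ioo ℓ (c.lev z), c.pSet z (c.level i) * b i := by
          rw [add_mul, sum_mul, c.r_mul_eq_pSet hreach (by omega) hℓj.ne, sum_congr rfl hr_mul]
      _ ≤ c.pSet z (c.level ℓ) + ∑ i ∈ Ioo ℓ (c.lev z), ∑ y ∈ c.level i, c.p z y * h ℓ y := by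
          gcongr with i hi
          exact c.pSet_mul_le_sum_mul fun y hy => hb_le i hi y (mem_filter.1 hy).2
      _ = h ℓ z - ∑ y ∈ c.level (c.lev z), c.p z y * h ℓ y := by
          rw [hh.eq_pSet_add_sum hℓj]
          ring
      _ ≤ h ℓ z - c.pSet z (c.level (c.lev z)) * h ℓ z := by
          gcongr
          exact c.pSet_mul_le_sum_mul hmin
      _ = h ℓ z * (1 - c.pSet z (c.level (c.lev z))) := by ring
  calc c.rmin (c.lev z) ℓ + ∑ i ∈ Ioo ℓ (c.lev z), c.rmin (c.lev z) i * b i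
      ≤ c.r z ℓ + ∑ i ∈ Ioo ℓ (c.lev z), c.r z i * b i := by
        refine add_le_add (c.rmin_le_r z ℓ) (sum_le_sum fun i hi => ?_)
        exact mul_le_mul_of_nonneg_right (c.rmin_le_r z i) (hb_nonneg i hi)
    _ ≤ h ℓ z := hfirst_step
    _ ≤ h ℓ x := hmin x (mem_filter.2 ⟨mem_univ x, hx⟩)

end LevelChain

/-- `hcmin` encodes the sum over decreasing index sequences `j > j_1 > ⋯ > j_m > ℓ` through the
recursion obtained by splitting off the first step `j → j_1`. -/
theorem explicit_lower_coefficients_le_hitProb_general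
    (c : LevelChain S) (hreach : c.Reachable)
    (h : ℕ → S → ℝ) (hh : c.IsHitProb h)
    (ℓ : ℕ)
    (cmin : ℕ → ℝ)
    (hcmin : ∀ j, ℓ < j →
      cmin j = c.rmin j ℓ + ∑ i ∈ Finset.Ioo ℓ j, c.rmin j i * cmin i) :
    ∀ j, ℓ < j → j ≤ c.K → ∀ x, c.lev x = j → cmin j ≤ h ℓ x := by
  suffices key : ∀ j, ℓ < j → 0 ≤ cmin j ∧ ∀ x, c.lev x = j → cmin j ≤ h ℓ x from
    fun j hj _ => (key j hj).2
  intro j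
  induction j using Nat.strong_induction_on with
  | _ j ih =>
  intro hℓj
  have ih' (i : ℕ) (hi : i ∈ Ioo ℓ j) := ih i (mem_Ioo.1 hi).2 (mem_Ioo.1 hi).1
  rw [hcmin j hℓj]
  refine ⟨?_, fun x hx => c.add_sum_rmin_mul_le_hitProb hreach hh hℓj
    (fun i hi => (ih' i hi).1) (fun i hi => (ih' i hi).2) hx⟩
  exact add_nonneg (c.rmin_nonneg j ℓ)
    (sum_nonneg fun i hi => mul_nonneg (c.rmin_nonneg j i) (ih' i hi).1)

/-- The explicit lower-bound coefficients `c^min_{j,ℓ}`, given by the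
sum over all strictly decreasing index sequences from `j` to `ℓ` of the products of the
corresponding `r_min` values (equivalently, characterized by the recursion
`c^min_{j,ℓ} = r_min(X_j,S_ℓ) + Σ_{ℓ<i<j} r_min(X_j,S_i)·c^min_{i,ℓ}`), satisfy
`c^min_{j,ℓ} ≤ h_min(X_j,S_ℓ)` for every `ℓ < j ≤ K`. -/
theorem explicit_lower_coefficients_le_hitProb
    (c : LevelChain S) (hreach : c.Reachable)
    (h : ℕ → S → ℝ) (hh : c.IsHitProb h)
    (ℓ : ℕ) (hℓ : 1 ≤ ℓ) (hℓK : ℓ < c.K)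
    (cmin : ℕ → ℝ)
    (hcmin : ∀ j, ℓ < j →
      cmin j = c.rmin j ℓ + ∑ i ∈ Finset.Ioo ℓ j, c.rmin j i * cmin i) :
    ∀ j, ℓ < j → j ≤ c.K → ∀ x, c.lev x = j → cmin j ≤ h ℓ x :=
  explicit_lower_coefficients_le_hitProb_general c hreach h hh ℓ cmin hcmin
end

section
/- Fix 1 ≤ ℓ < K. For each j with ℓ < j ≤ K define c^max_{j,ℓ} as the sum, over all m ≥ 0 and all strictly decreasing index sequences j > j_1 > j_2 > ⋯ > j_m > ℓ, of the products r_max(X_j,S_{j_1}) · r_max(X_{j_1},S_{j_2}) ⋯ r_max(X_{j_{m−1}},S_{j_m}) · r_max(X_{j_m},S_ℓ), the m = 0 term being r_max(X_j,S_ℓ). Then c^max_{j,ℓ} ≥ h_max(X_j,S_ℓ) for every ℓ < j ≤ K. -/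
open Finset

variable {S : Type*} [Fintype S]

/-! Strong induction on `j`. Let `z` maximise `h(·, S_ℓ)` on `S_j`. In the one-step equation
at `z`, bound the part staying in `S_j` by `p(z, S_j) h(z)` and the part entering a lower level
`S_i` by `p(z, S_i) c^max_i` (by `p(z, S_ℓ)` when `i = ℓ`). Since `1 - p(z, S_j) > 0` by
reachability, dividing by it turns each `p(z, S_i)` into `r(z, S_i) ≤ r_max(X_j, S_i)`, and the
recursion for `c^max` closes the induction. -/

namespace LevelChain

variable (c : LevelChain S)

@[simp]
lemma mem_level {x : S} {k : ℕ} : x ∈ c.level k ↔ c.lev x = k := by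
  simp [level]

@[simp]
lemma mem_levels {x : S} {i j : ℕ} : x ∈ c.levels i j ↔ i ≤ c.lev x ∧ c.lev x ≤ j := by
  simp [levels]

lemma pSet_levels_zero_lev (x : S) : c.pSet x (c.levels 0 (c.lev x)) = 1 := by
  rw [← c.p_row_sum x, pSet]
  refine sum_subset (subset_univ _) fun y _ hy => c.elitist x y ?_
  simpa using hy

lemma sum_levels_eq_sum_Icc (F : S → ℝ) (i j : ℕ) :
    ∑ y ∈ c.levels i j, F y = ∑ k ∈ Icc i j, ∑ y ∈ c.level k, F y := by
  rw [← sum_fiberwise_of_maps_to (g := c.lev) (t := Icc i j) fun y hy => by simpa using hy]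
  refine sum_congr rfl fun k hk => congrArg (∑ y ∈ ·, F y) ?_
  ext y
  simp only [mem_filter, mem_levels, mem_level, mem_Icc] at hk ⊢
  omega

lemma pSet_levels_eq_sum_Icc (x : S) (i j : ℕ) :
    c.pSet x (c.levels i j) = ∑ k ∈ Icc i j, c.pSet x (c.level k) :=
  c.sum_levels_eq_sum_Icc _ i j

lemma one_sub_pSet_level_lev_pos (hreach : c.Reachable) {x : S} (hx : 0 < c.lev x) :
    0 < 1 - c.pSet x (c.level (c.lev x)) := by
  set j := c.lev x
  have hsplit : c.pSet x (c.levels 0 (j - 1)) + c.pSet x (c.level j) = 1 := by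
    rw [← c.pSet_levels_zero_lev x, pSet_levels_eq_sum_Icc, pSet_levels_eq_sum_Icc,
      ← insert_Icc_sub_one_right_eq_Icc (Nat.zero_le j), sum_insert (by simp; omega), add_comm]
  linarith [hreach j hx (c.lev_le x) x rfl]

lemma r_le_rmax {x : S} {k : ℕ} (hx : c.lev x = k) (i : ℕ) : c.r x i ≤ c.rmax k i :=
  le_csSup (Set.toFinite _).bddAbove ⟨x, hx, rfl⟩

lemma sum_level_mul_le {x : S} {k : ℕ} {f : S → ℝ} {b : ℝ}
    (hf : ∀ y, c.lev y = k → f y ≤ b) :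
    ∑ y ∈ c.level k, c.p x y * f y ≤ c.pSet x (c.level k) * b := by
  rw [pSet, sum_mul]
  exact sum_le_sum fun y hy =>
    mul_le_mul_of_nonneg_left (hf y (c.mem_level.1 hy)) (c.p_nonneg x y)

lemma le_sum_r_mul_of_isMaxOn_level (hreach : c.Reachable) {f : S → ℝ} {B : ℕ → ℝ}
    {ℓ : ℕ} {z : S} (hℓz : ℓ < c.lev z)
    (hf : f z = ∑ y ∈ c.levels ℓ (c.lev z), c.p z y * f y)
    (hmax : IsMaxOn f {y | c.lev y = c.lev z} z)
    (hB : ∀ y, ℓ ≤ c.lev y → c.lev y < c.lev z → f y ≤ B (c.lev y)) :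
    f z ≤ ∑ i ∈ Ico ℓ (c.lev z), c.r z i * B i := by
  set j := c.lev z
  set D := 1 - c.pSet z (c.level j)
  have hD : 0 < D := c.one_sub_pSet_level_lev_pos hreach (by omega)
  have hlower : ∀ i ∈ Ico ℓ j, ∑ y ∈ c.level i, c.p z y * f y ≤ c.pSet z (c.level i) * B i :=
    fun i hi => c.sum_level_mul_le fun y hy => hy ▸ hB y (by simp_all) (by simp_all)
  have hself : ∑ y ∈ c.level j, c.p z y * f y ≤ c.pSet z (c.level j) * f z :=
    c.sum_level_mul_le fun y hy => isMaxOn_iff.1 hmax y hy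
  have hsplit : f z = ∑ i ∈ Ico ℓ j, ∑ y ∈ c.level i, c.p z y * f y
      + ∑ y ∈ c.level j, c.p z y * f y := by
    rw [hf, sum_levels_eq_sum_Icc, ← Ico_insert_right hℓz.le, sum_insert right_notMem_Ico,
      add_comm]
  have hr : ∀ i ∈ Ico ℓ j, c.r z i = c.pSet z (c.level i) / D := fun i hi => by
    rw [r, if_neg (mem_Ico.1 hi).2.ne]
  rw [sum_congr rfl fun i hi => by rw [hr i hi, div_mul_eq_mul_div], ← sum_div,
    le_div_iff₀ hD]
  linarith [sum_le_sum hlower]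

lemma hitProb_le_sum_rmax_mul (hreach : c.Reachable) {h : ℕ → S → ℝ} (hh : c.IsHitProb h)
    {B : ℕ → ℝ} {ℓ j : ℕ} (hℓj : ℓ < j) (hjK : j ≤ c.K)
    (hB : ∀ y, ℓ ≤ c.lev y → c.lev y < j → h ℓ y ≤ B (c.lev y)) {x : S} (hx : c.lev x = j) :
    h ℓ x ≤ ∑ i ∈ Ico ℓ j, c.rmax j i * B i := by
  obtain ⟨hbounds, -, -, hstep⟩ := hh
  obtain ⟨z, hz, hzmax⟩ := exists_max_image (c.level j) (h ℓ) ⟨x, c.mem_level.2 hx⟩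
  rw [mem_level] at hz
  have hB_nonneg : ∀ i ∈ Ico ℓ j, 0 ≤ B i := fun i hi => by
    obtain ⟨y, hy⟩ := c.level_nonempty i (by simp at hi; omega)
    exact (hbounds ℓ y).1.trans (hy ▸ hB y (by simp_all) (by simp_all))
  calc h ℓ x ≤ h ℓ z := hzmax x (c.mem_level.2 hx)
    _ ≤ ∑ i ∈ Ico ℓ j, c.r z i * B i := hz ▸ c.le_sum_r_mul_of_isMaxOn_level hreach
        (hz ▸ hℓj) (hstep ℓ z (hz ▸ hℓj))
        (isMaxOn_iff.2 fun y hy => hzmax y (c.mem_level.2 (hy.trans hz))) (fun y => hz ▸ hB y)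
    _ ≤ ∑ i ∈ Ico ℓ j, c.rmax j i * B i := sum_le_sum fun i hi =>
        mul_le_mul_of_nonneg_right (c.r_le_rmax hz i) (hB_nonneg i hi)

end LevelChain

theorem explicit_upper_coefficients_ge_hitProb_general
    (c : LevelChain S) (hreach : c.Reachable)
    (h : ℕ → S → ℝ) (hh : c.IsHitProb h)
    (ℓ : ℕ)
    (cmax : ℕ → ℝ)
    (hcmax : ∀ j, ℓ < j →
      cmax j = c.rmax j ℓ + ∑ i ∈ Finset.Ioo ℓ j, c.rmax j i * cmax i) :
    ∀ j, ℓ < j → j ≤ c.K → ∀ x, c.lev x = j → cmax j ≥ h ℓ x := by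
  intro j
  induction j using Nat.strong_induction_on with
  | _ j ih =>
  intro hℓj hjK x hx
  -- `h ℓ = 1` on `S_ℓ` plays the role of the empty path `c^max_{ℓ,ℓ} = 1`.
  have hB : ∀ y, ℓ ≤ c.lev y → c.lev y < j → h ℓ y ≤ Function.update cmax ℓ 1 (c.lev y) := by
    intro y hℓy hyj
    rcases hℓy.eq_or_lt with hyℓ | hyℓ
    · rw [← hyℓ, Function.update_self, hh.2.1 ℓ y hyℓ.symm]
    · rw [Function.update_of_ne hyℓ.ne']
      exact ih _ hyj hyℓ (by omega) y rfl
  have hrec : ∑ i ∈ Ico ℓ j, c.rmax j i * Function.update cmax ℓ 1 i = cmax j := by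
    rw [hcmax j hℓj, ← Ioo_insert_left hℓj, sum_insert left_notMem_Ioo, Function.update_self,
      mul_one]
    exact congrArg _ (sum_congr rfl fun i hi => by
      rw [Function.update_of_ne (mem_Ioo.1 hi).1.ne'])
  exact hrec ▸ c.hitProb_le_sum_rmax_mul hreach hh hℓj hjK hB hx

/-- The explicit upper-bound coefficients `c^max_{j,ℓ}`, given by the
sum over all strictly decreasing index sequences from `j` to `ℓ` of the products of the
corresponding `r_max` values (equivalently, characterized by the recursion
`c^max_{j,ℓ} = r_max(X_j,S_ℓ) + Σ_{ℓ<i<j} r_max(X_j,S_i)·c^max_{i,ℓ}`), satisfy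
`c^max_{j,ℓ} ≥ h_max(X_j,S_ℓ)` for every `ℓ < j ≤ K`. -/
theorem explicit_upper_coefficients_ge_hitProb
    (c : LevelChain S) (hreach : c.Reachable)
    (h : ℕ → S → ℝ) (hh : c.IsHitProb h)
    (ℓ : ℕ) (hℓ : 1 ≤ ℓ) (hℓK : ℓ < c.K)
    (cmax : ℕ → ℝ)
    (hcmax : ∀ j, ℓ < j →
      cmax j = c.rmax j ℓ + ∑ i ∈ Finset.Ioo ℓ j, c.rmax j i * cmax i) :
    ∀ j, ℓ < j → j ≤ c.K → ∀ x, c.lev x = j → cmax j ≥ h ℓ x :=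
  explicit_upper_coefficients_ge_hitProb_general c hreach h hh ℓ cmax hcmax
end
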